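/- arXiv:1601.02149 — 2 statements merged into one kernel-verified Lean document; each statement's English description precedes it below -/
import Mathlib

section
/- For any η > 0 and reals a < b, the function F_η(x) = 1 - (1/(η(b-a))) · ln((1 + e^{-η(x-b)})/(1 + e^{-η(x-a)})) is monotone nondecreasing on ℝ. -/
theorem stmt4 (η a b : ℝ) (hη : 0 < η) (hab : a < b) :
    Monotone (fun x : ℝ => 1 - (1 / (η * (b - a))) *
        Real.log ((1 + Real.exp (-η * (x - b))) / (1 + Real.exp (-η * (x - a))))) := by
  intro x y hxy
  have hba : (0:ℝ) < b - a := sub_pos.2 hab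
  have hc : 0 ≤ 1 / (η * (b - a)) := by positivity
  simp only
  have hposxb : (0:ℝ) < 1 + Real.exp (-η * (x - b)) := by positivity
  have hposxa : (0:ℝ) < 1 + Real.exp (-η * (x - a)) := by positivity
  have hposyb : (0:ℝ) < 1 + Real.exp (-η * (y - b)) := by positivity
  have hposya : (0:ℝ) < 1 + Real.exp (-η * (y - a)) := by positivity
  have key : (1 + Real.exp (-η * (y - b))) / (1 + Real.exp (-η * (y - a))) ≤
      (1 + Real.exp (-η * (x - b))) / (1 + Real.exp (-η * (x - a))) := by
    rw [div_le_div_iff₀ hposya hposxa]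
    have e1 : Real.exp (-η * (y - b)) = Real.exp (η * b) * Real.exp (-η * y) := by
      rw [← Real.exp_add]; ring_nf
    have e2 : Real.exp (-η * (y - a)) = Real.exp (η * a) * Real.exp (-η * y) := by
      rw [← Real.exp_add]; ring_nf
    have e3 : Real.exp (-η * (x - b)) = Real.exp (η * b) * Real.exp (-η * x) := by
      rw [← Real.exp_add]; ring_nf
    have e4 : Real.exp (-η * (x - a)) = Real.exp (η * a) * Real.exp (-η * x) := by
      rw [← Real.exp_add]; ring_nf
    rw [e1, e2, e3, e4]
    have hAB : Real.exp (η * a) < Real.exp (η * b) := by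
      apply Real.exp_lt_exp.2
      nlinarith
    have huv : Real.exp (-η * y) ≤ Real.exp (-η * x) := by
      apply Real.exp_le_exp.2
      nlinarith
    have hu : (0:ℝ) < Real.exp (-η * x) := Real.exp_pos _
    have hv : (0:ℝ) < Real.exp (-η * y) := Real.exp_pos _
    nlinarith [mul_pos hu hv, Real.exp_pos (η * a), Real.exp_pos (η * b)]
  have hlog : Real.log ((1 + Real.exp (-η * (y - b))) / (1 + Real.exp (-η * (y - a)))) ≤
      Real.log ((1 + Real.exp (-η * (x - b))) / (1 + Real.exp (-η * (x - a)))) :=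
    Real.log_le_log (by positivity) key
  have := mul_le_mul_of_nonneg_left hlog hc
  linarith
end

section
/- Let a < b and let F_η be the CDF given by F_η(x) = 1 − (1/(η(b−a)))·ln((1 + e^{−η(x−b)})/(1 + e^{−η(x−a)})). Then for every real x with x ≠ a and x ≠ b, F_η(x) converges as η → ∞ to the CDF of Uniform(a,b): it tends to 0 for x < a, to (x−a)/(b−a) for a < x < b, and to 1 for x > b. -/
/-! Since `max t 0 ≤ log (1 + exp t) ≤ max t 0 + log 2`, the softplus satisfies
`log (1 + exp (η c)) / η → max c 0` as `η → ∞`. As `F_η(x)` is `1 - (s(b - x) - s(a - x)) / (b - a)`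
with `s(c) = log (1 + exp (η c)) / η`, it tends to `1 - (max (b - x) 0 - max (a - x) 0) / (b - a)`,
which is the CDF of the uniform distribution on `[a, b]`. -/

open Filter Topology Real

lemma max_le_log_one_add_exp (t : ℝ) : max t 0 ≤ log (1 + exp t) := by
  refine max_le ?_ (log_nonneg (by linarith [exp_pos t]))
  calc t = log (exp t) := (log_exp t).symm
    _ ≤ log (1 + exp t) := log_le_log (exp_pos t) (by linarith)

lemma log_one_add_exp_le (t : ℝ) : log (1 + exp t) ≤ max t 0 + log 2 := by
  have hle : 1 + exp t ≤ 2 * exp (max t 0) := by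
    have h1 : 1 ≤ exp (max t 0) := one_le_exp (le_max_right t 0)
    have h2 : exp t ≤ exp (max t 0) := exp_le_exp.mpr (le_max_left t 0)
    linarith
  calc log (1 + exp t) ≤ log (2 * exp (max t 0)) := log_le_log (by positivity) hle
    _ = max t 0 + log 2 := by rw [log_mul two_ne_zero (exp_ne_zero _), log_exp, add_comm]

lemma tendsto_log_one_add_exp_mul_div_atTop (c : ℝ) :
    Tendsto (fun η : ℝ => log (1 + exp (η * c)) / η) atTop (𝓝 (max c 0)) := by
  have hupper : Tendsto (fun η : ℝ => max c 0 + log 2 / η) atTop (𝓝 (max c 0)) := by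
    simpa using tendsto_const_nhds.add
      ((tendsto_const_nhds (x := log 2)).div_atTop (tendsto_id (x := atTop)))
  refine tendsto_of_tendsto_of_tendsto_of_le_of_le' tendsto_const_nhds hupper ?_ ?_ <;>
    filter_upwards [eventually_gt_atTop 0] with η hη
  · rw [le_div_iff₀ hη, mul_comm, mul_max_of_nonneg _ _ hη.le, mul_zero]
    exact max_le_log_one_add_exp _
  · rw [add_div' _ _ _ hη.ne', div_le_div_iff_of_pos_right hη, mul_comm (max c 0),
      mul_max_of_nonneg _ _ hη.le, mul_zero]
    exact log_one_add_exp_le _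

noncomputable def smoothUniformCDF (a b η x : ℝ) : ℝ :=
  1 - (1 / (η * (b - a))) * log ((1 + exp (-η * (x - b))) / (1 + exp (-η * (x - a))))

lemma tendsto_smoothUniformCDF_atTop (a b x : ℝ) :
    Tendsto (fun η : ℝ => smoothUniformCDF a b η x) atTop
      (𝓝 (1 - (max (b - x) 0 - max (a - x) 0) / (b - a))) := by
  refine (tendsto_const_nhds.sub
    (((tendsto_log_one_add_exp_mul_div_atTop (b - x)).sub
      (tendsto_log_one_add_exp_mul_div_atTop (a - x))).div_const (b - a))).congr' ?_
  filter_upwards [eventually_gt_atTop 0] with η hη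
  rw [smoothUniformCDF, neg_mul_comm, neg_sub, neg_mul_comm, neg_sub,
    log_div (by positivity) (by positivity)]
  field_simp

theorem stmt15_general (a b : ℝ) (hab : a < b) (x : ℝ) :
    (x < a →
      Tendsto (fun η : ℝ => 1 - (1 / (η * (b - a))) *
          Real.log ((1 + Real.exp (-η * (x - b))) / (1 + Real.exp (-η * (x - a)))))
        atTop (nhds 0)) ∧
    (a < x → x < b →
      Tendsto (fun η : ℝ => 1 - (1 / (η * (b - a))) *
          Real.log ((1 + Real.exp (-η * (x - b))) / (1 + Real.exp (-η * (x - a)))))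
        atTop (nhds ((x - a) / (b - a)))) ∧
    (b < x →
      Tendsto (fun η : ℝ => 1 - (1 / (η * (b - a))) *
          Real.log ((1 + Real.exp (-η * (x - b))) / (1 + Real.exp (-η * (x - a)))))
        atTop (nhds 1)) := by
  have hlim := tendsto_smoothUniformCDF_atTop a b x
  unfold smoothUniformCDF at hlim
  refine ⟨fun hxa => ?_, fun hax hxb => ?_, fun hbx => ?_⟩
  · convert hlim using 2
    rw [max_eq_left (by linarith), max_eq_left (by linarith), sub_sub_sub_cancel_right,
      div_self (sub_ne_zero.mpr hab.ne'), sub_self]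
  · convert hlim using 2
    rw [max_eq_left (by linarith), max_eq_right (by linarith)]
    field_simp [sub_ne_zero.mpr hab.ne']
    ring
  · convert hlim using 2
    rw [max_eq_right (by linarith), max_eq_right (by linarith)]
    simp

theorem stmt15 (a b : ℝ) (hab : a < b) (x : ℝ) (hxa : x ≠ a) (hxb : x ≠ b) :
    (x < a →
      Tendsto (fun η : ℝ => 1 - (1 / (η * (b - a))) *
          Real.log ((1 + Real.exp (-η * (x - b))) / (1 + Real.exp (-η * (x - a)))))
        atTop (nhds 0)) ∧
    (a < x → x < b →
      Tendsto (fun η : ℝ => 1 - (1 / (η * (b - a))) *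
          Real.log ((1 + Real.exp (-η * (x - b))) / (1 + Real.exp (-η * (x - a)))))
        atTop (nhds ((x - a) / (b - a)))) ∧
    (b < x →
      Tendsto (fun η : ℝ => 1 - (1 / (η * (b - a))) *
          Real.log ((1 + Real.exp (-η * (x - b))) / (1 + Real.exp (-η * (x - a)))))
        atTop (nhds 1)) :=
  stmt15_general a b hab x
end
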